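/- For all x ≠ 0, x·Φ'(x) − Φ(x) > 0. -/

import Mathlib

noncomputable def Phi (x : ℝ) : ℝ := if x = 0 then 0 else Real.log ((Real.exp x - 1) / x)

/-!
`Φ` is the logarithm of the difference quotient `dslope exp 0`, hence continuous on all of `ℝ`
with `Φ 0 = 0`. Away from `0`, `Φ'' x = 1 / x ^ 2 - eˣ / (eˣ - 1) ^ 2`, which is positive because
`eˣ - 1 = 2 e^(x/2) sinh (x/2)` and `|sinh y| > |y|` for `y ≠ 0`. So `Φ` is strictly convex on each
closed half-line, and the tangent line at `x` passes strictly below the graph at `0`: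
`Φ x + Φ' x * (0 - x) < Φ 0 = 0`.
-/

open Real Set Filter Topology

theorem StrictConvexOn.add_mul_sub_lt_of_hasDerivAt {S : Set ℝ} {f : ℝ → ℝ} {x y f' : ℝ}
    (hf : StrictConvexOn ℝ S f) (hx : x ∈ S) (hy : y ∈ S) (hxy : x ≠ y)
    (hf' : HasDerivAt f f' x) : f x + f' * (y - x) < f y := by
  rcases hxy.lt_or_gt with h | h
  · have := hf.lt_slope_of_hasDerivAt hx hy h hf'
    rw [slope_def_field, lt_div_iff₀ (sub_pos.mpr h)] at this
    linarith
  · have := hf.slope_lt_of_hasDerivAt hy hx h hf'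
    rw [slope_def_field, div_lt_iff₀ (sub_pos.mpr h)] at this
    linarith

theorem sq_lt_sinh_sq {x : ℝ} (hx : x ≠ 0) : x ^ 2 < sinh x ^ 2 :=
  sq_lt_sq.mpr <| by rw [abs_sinh]; exact self_lt_sinh_iff.mpr (abs_pos.mpr hx)

theorem exp_sub_one_eq_mul_sinh (x : ℝ) : exp x - 1 = 2 * exp (x / 2) * sinh (x / 2) := by
  have h : exp x = exp (x / 2) * exp (x / 2) := by rw [← exp_add, add_halves]
  rw [sinh_eq, h, exp_neg]
  field_simp

theorem sq_mul_exp_lt_exp_sub_one_sq {x : ℝ} (hx : x ≠ 0) : x ^ 2 * exp x < (exp x - 1) ^ 2 :=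
  calc x ^ 2 * exp x = 4 * (x / 2) ^ 2 * exp x := by ring
    _ < 4 * sinh (x / 2) ^ 2 * exp x := by
      gcongr 4 * ?_ * _
      exact sq_lt_sinh_sq (by simpa using hx)
    _ = (exp x - 1) ^ 2 := by
      rw [exp_sub_one_eq_mul_sinh, mul_pow, mul_pow, ← exp_nat_mul]; ring_nf

theorem exp_sub_one_ne_zero {x : ℝ} (hx : x ≠ 0) : exp x - 1 ≠ 0 :=
  sub_ne_zero.mpr <| by simpa using hx

theorem Phi_zero : Phi 0 = 0 := if_pos rfl

theorem Phi_eq_log_dslope (x : ℝ) : Phi x = log (dslope exp 0 x) := by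
  rcases eq_or_ne x 0 with rfl | hx
  · simp [Phi_zero, dslope_same]
  · rw [Phi, if_neg hx, dslope_of_ne _ hx, slope_def_field, exp_zero, sub_zero]

theorem continuous_Phi : Continuous Phi := by
  have hq : Continuous (dslope exp 0) := continuousOn_univ.mp <|
    (continuousOn_dslope univ_mem).mpr ⟨continuous_exp.continuousOn, differentiableAt_exp⟩
  refine (funext Phi_eq_log_dslope ▸ hq.log) fun x => ?_
  rcases eq_or_ne x 0 with rfl | hx
  · simp [dslope_same]
  · rw [dslope_of_ne _ hx, slope_def_field, exp_zero, sub_zero]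
    exact div_ne_zero (exp_sub_one_ne_zero hx) hx

theorem Phi_eventuallyEq {x : ℝ} (hx : x ≠ 0) :
    Phi =ᶠ[𝓝 x] fun y => log (exp y - 1) - log y := by
  filter_upwards [eventually_ne_nhds hx] with y hy
  rw [Phi, if_neg hy, log_div (exp_sub_one_ne_zero hy) hy]

theorem hasDerivAt_Phi {x : ℝ} (hx : x ≠ 0) :
    HasDerivAt Phi (exp x / (exp x - 1) - x⁻¹) x :=
  ((((hasDerivAt_exp x).sub_const 1).log (exp_sub_one_ne_zero hx)).sub
    (hasDerivAt_log hx)).congr_of_eventuallyEq (Phi_eventuallyEq hx)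

theorem hasDerivAt_deriv_Phi {x : ℝ} (hx : x ≠ 0) :
    HasDerivAt (deriv Phi) ((x ^ 2)⁻¹ - exp x / (exp x - 1) ^ 2) x := by
  have hd : deriv Phi =ᶠ[𝓝 x] fun y => exp y / (exp y - 1) - y⁻¹ := by
    filter_upwards [eventually_ne_nhds hx] with y hy
    exact (hasDerivAt_Phi hy).deriv
  refine (((hasDerivAt_exp x).div ((hasDerivAt_exp x).sub_const 1) (exp_sub_one_ne_zero hx)).sub
    (hasDerivAt_inv hx)).congr_of_eventuallyEq hd |>.congr_deriv ?_
  have := exp_sub_one_ne_zero hx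
  field_simp
  ring

theorem deriv_deriv_Phi_pos {x : ℝ} (hx : x ≠ 0) : 0 < deriv (deriv Phi) x := by
  have := exp_sub_one_ne_zero hx
  rw [(hasDerivAt_deriv_Phi hx).deriv, sub_pos, div_lt_iff₀ (by positivity), inv_mul_eq_div,
    lt_div_iff₀ (by positivity), mul_comm]
  exact sq_mul_exp_lt_exp_sub_one_sq hx

theorem strictConvexOn_Phi {S : Set ℝ} (hS : Convex ℝ S) (h0 : (0 : ℝ) ∉ interior S) :
    StrictConvexOn ℝ S Phi :=
  strictConvexOn_of_deriv2_pos hS continuous_Phi.continuousOn fun _ hx =>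
    deriv_deriv_Phi_pos (ne_of_mem_of_not_mem hx h0)

theorem mul_deriv_Phi_sub_Phi_pos (x : ℝ) (hx : x ≠ 0) :
    x * deriv Phi x - Phi x > 0 := by
  obtain ⟨S, hS, h0, hxS⟩ : ∃ S : Set ℝ, StrictConvexOn ℝ S Phi ∧ 0 ∈ S ∧ x ∈ S := by
    rcases hx.lt_or_gt with h | h
    · exact ⟨Iic 0, strictConvexOn_Phi (convex_Iic 0) (by simp), self_mem_Iic, h.le⟩
    · exact ⟨Ici 0, strictConvexOn_Phi (convex_Ici 0) (by simp), self_mem_Ici, h.le⟩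
  have hd := hasDerivAt_Phi hx
  have htangent := hS.add_mul_sub_lt_of_hasDerivAt hxS h0 hx hd
  rw [Phi_zero] at htangent
  rw [hd.deriv]
  linarith
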